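/- arXiv:2502.00417 — 3 statements merged into one kernel-verified Lean document; each statement's English description precedes it below -/
import Mathlib

section
/- (Frobenius) For any finite group G and any irreducible complex character ρ of G, the average of ρ over commutators satisfies (1/|G|²) ∑_{x,y ∈ G} ρ(x y x⁻¹ y⁻¹) = 1/ρ(1). -/
open CategoryTheory

open Module in
lemma frobenius_key {G : Type} [Group G] [Fintype G]
    (V : FDRep ℂ G) [Simple V] (y : G) :
    (Module.finrank ℂ V : ℂ) * ∑ x : G, V.character (x * y * x⁻¹ * y⁻¹)
      = (Fintype.card G : ℂ) * (V.character y * V.character y⁻¹) := by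
  classical
  -- the averaging operator
  set T : V →ₗ[ℂ] V := ∑ x : G, V.ρ (x * y * x⁻¹) with hT
  have hcomm : ∀ g : G, (V.ρ g : Module.End ℂ V) * T = T * V.ρ g := by
    intro g
    rw [hT, Finset.mul_sum, Finset.sum_mul]
    refine Fintype.sum_equiv (Equiv.mulLeft g) _ _ ?_
    intro x
    simp only [Equiv.coe_mulLeft, ← map_mul]
    congr 1
    group
  -- package `T` as a morphism in `FDRep ℂ G`
  let Th : V ⟶ V := ⟨InducedCategory.homMk (ModuleCat.ofHom T), fun g => by
    ext v
    exact DFunLike.congr_fun (hcomm g).symm v⟩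
  obtain ⟨c, hc⟩ := endomorphism_simple_eq_smul_id (𝕜 := ℂ) Th
  have hc' : (c • LinearMap.id : V →ₗ[ℂ] V) = T := congrArg (fun f : V ⟶ V => f.hom.hom.hom) hc
  -- trace of `T`
  have htr : ∀ x : G, LinearMap.trace ℂ V (V.ρ (x * y * x⁻¹)) = V.character y := fun x =>
    V.char_conj y x
  have htrT : LinearMap.trace ℂ V T = (Fintype.card G : ℂ) * V.character y := by
    rw [hT, map_sum]
    rw [Finset.sum_congr rfl fun x _ => htr x, Finset.sum_const, Finset.card_univ,
      nsmul_eq_mul]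
  have hcd : c * (Module.finrank ℂ V : ℂ) = (Fintype.card G : ℂ) * V.character y := by
    have := congrArg (LinearMap.trace ℂ V) hc'
    rwa [map_smul, LinearMap.trace_id, smul_eq_mul, htrT] at this
  -- trace of `T * ρ(y⁻¹)`
  have htr2 : ∑ x : G, V.character (x * y * x⁻¹ * y⁻¹) = c * V.character y⁻¹ := by
    have h3 := congrArg (fun (f : Module.End ℂ V) => LinearMap.trace ℂ V (f * V.ρ y⁻¹)) hc'
    simp only [hT, Finset.sum_mul, map_sum] at h3
    have h4 : (LinearMap.trace ℂ V) ((c • LinearMap.id : Module.End ℂ V) * V.ρ y⁻¹)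
        = c * V.character y⁻¹ := by
      rw [smul_mul_assoc, map_smul, Module.End.mul_eq_comp, LinearMap.id_comp, smul_eq_mul]; rfl
    rw [h4] at h3
    rw [h3]
    refine Finset.sum_congr rfl fun x _ => ?_
    rw [FDRep.character, map_mul]
  rw [htr2, mul_comm (Module.finrank ℂ V : ℂ) (c * V.character y⁻¹), mul_assoc, ← mul_assoc c,
    mul_comm _ (Module.finrank ℂ V : ℂ), ← mul_assoc, mul_comm _ c, hcd]
  ring

/-- (Frobenius) For any finite group `G` and any irreducible complex character `ρ` of `G`,
`(1/|G|²) ∑_{x,y} ρ(x y x⁻¹ y⁻¹) = 1/ρ(1)`. -/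
theorem frobenius_average_of_character_over_commutators
    {G : Type} [Group G] [Fintype G]
    (V : FDRep ℂ G) [Simple V] :
    ((Fintype.card G : ℂ) ^ 2)⁻¹ * ∑ x : G, ∑ y : G, V.character (x * y * x⁻¹ * y⁻¹)
      = (V.character 1)⁻¹ := by
  classical
  have hcard : (Fintype.card G : ℂ) ≠ 0 := by
    exact_mod_cast (Fintype.card_ne_zero : Fintype.card G ≠ 0)
  letI : Invertible (Fintype.card G : ℂ) := invertibleOfNonzero hcard
  letI : Fintype G := ‹Fintype G›
  letI : Invertible ((Fintype.card G : ℂ)) := invertibleOfNonzero hcard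
  have horth := FDRep.char_orthonormal (k := ℂ) (G := G) V V
  rw [if_pos ⟨Iso.refl V⟩] at horth
  have hsum : ∑ g : G, V.character g * V.character g⁻¹ = (Fintype.card G : ℂ) := by
    have hc2 : (Nat.card G : ℂ) = (Fintype.card G : ℂ) := by rw [Nat.card_eq_fintype_card]
    have h2 := congrArg (fun z => (Fintype.card G : ℂ) * z) horth
    simp only [smul_eq_mul, ← mul_assoc, invOf_eq_inv, hc2, mul_inv_cancel₀ hcard,
      one_mul, mul_one] at h2
    exact h2
  set d : ℂ := (Module.finrank ℂ V : ℂ) with hd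
  set S : ℂ := ∑ x : G, ∑ y : G, V.character (x * y * x⁻¹ * y⁻¹) with hS
  have hdS : d * S = (Fintype.card G : ℂ) ^ 2 := by
    rw [hS, Finset.sum_comm, Finset.mul_sum]
    calc ∑ y : G, d * ∑ x : G, V.character (x * y * x⁻¹ * y⁻¹)
        = ∑ y : G, (Fintype.card G : ℂ) * (V.character y * V.character y⁻¹) :=
          Finset.sum_congr rfl fun y _ => frobenius_key V y
      _ = (Fintype.card G : ℂ) * ∑ y : G, V.character y * V.character y⁻¹ := by
          rw [Finset.mul_sum]
      _ = (Fintype.card G : ℂ) ^ 2 := by rw [hsum]; ring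
  have hdne : d ≠ 0 := by
    intro h
    rw [h, zero_mul] at hdS
    exact (pow_ne_zero 2 hcard) hdS.symm
  rw [V.char_one, ← hd]
  field_simp
  rw [mul_comm] at hdS
  rw [hdS]
end

section
/- Let G be a finite group and μ a conjugation-invariant probability measure on G such that the identity 1 lies in the support of μ and the support of μ is not contained in any proper normal subgroup of G. Then there exists 0 < α < 1 and a constant such that for every t ∈ ℕ, max_{g ∈ G} | |G|·μ^{*t}(g) − 1 | ≤ |G| · α^t, where μ^{*t} is the t-fold convolution power of μ. -/
set_option linter.unusedSectionVars false

variable {G : Type*} [Group G] [Fintype G] [DecidableEq G]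

/-- The `t`-fold convolution power of a measure `μ` on a finite group `G`
(with `μ^{*0}` the Dirac measure at the identity), where
`(μ * ν)(g) = ∑_h μ(h) ν(h⁻¹ g)`. -/
noncomputable def convPow (μ : G → ℝ) : ℕ → G → ℝ
  | 0 => fun g => if g = 1 then 1 else 0
  | (t + 1) => fun g => ∑ x : G, convPow μ t x * μ (x⁻¹ * g)

lemma convPow_nonneg (μ : G → ℝ) (h : ∀ g, 0 ≤ μ g) : ∀ t g, 0 ≤ convPow μ t g := by
  intro t
  induction t with
  | zero => intro g; simp [convPow]; positivity
  | succ t ih =>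
    intro g
    exact Finset.sum_nonneg fun x _ => mul_nonneg (ih x) (h _)

lemma sum_shift (ν : G → ℝ) (g : G) : ∑ x : G, ν (x⁻¹ * g) = ∑ y : G, ν y := by
  apply Fintype.sum_bijective (fun x : G => x⁻¹ * g)
  · exact (Equiv.inv G |>.trans (Equiv.mulRight g)).bijective
  · intro x; rfl

lemma convPow_sum (μ : G → ℝ) (hsum : ∑ g : G, μ g = 1) :
    ∀ t, ∑ g : G, convPow μ t g = 1 := by
  intro t
  induction t with
  | zero => simp [convPow]
  | succ t ih =>
    simp only [convPow]
    rw [Finset.sum_comm]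
    calc ∑ x : G, ∑ g : G, convPow μ t x * μ (x⁻¹ * g)
        = ∑ x : G, convPow μ t x * ∑ g : G, μ (x⁻¹ * g) := by
          simp [Finset.mul_sum]
      _ = 1 := by
          have : ∀ x : G, ∑ g : G, μ (x⁻¹ * g) = 1 := by
            intro x
            rw [← hsum]
            apply Fintype.sum_bijective (fun g : G => x⁻¹ * g)
            · exact (Equiv.mulLeft x⁻¹).bijective
            · intro y; rfl
          simp [this, ih]

lemma convPow_add (μ : G → ℝ) (s t : ℕ) (g : G) :
    convPow μ (s + t) g = ∑ x : G, convPow μ s x * convPow μ t (x⁻¹ * g) := by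
  induction t generalizing g with
  | zero =>
    simp only [Nat.add_zero, convPow]
    rw [Finset.sum_eq_single g]
    · simp
    · intro b _ hb
      rw [if_neg, mul_zero]
      intro hcontra
      rw [inv_mul_eq_one] at hcontra
      exact hb hcontra
    · simp
  | succ t ih =>
    show convPow μ (s + t + 1) g = _
    simp only [convPow]
    calc ∑ x : G, convPow μ (s + t) x * μ (x⁻¹ * g)
        = ∑ x : G, (∑ y : G, convPow μ s y * convPow μ t (y⁻¹ * x)) * μ (x⁻¹ * g) := by
          simp [ih]
      _ = ∑ y : G, convPow μ s y * ∑ x : G, convPow μ t (y⁻¹ * x) * μ (x⁻¹ * g) := by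
          simp only [Finset.sum_mul]
          rw [Finset.sum_comm]
          simp [Finset.mul_sum, mul_assoc]
      _ = ∑ y : G, convPow μ s y * ∑ z : G, convPow μ t z * μ (z⁻¹ * (y⁻¹ * g)) := by
          congr 1; ext y
          congr 1
          apply Fintype.sum_bijective (fun x : G => y⁻¹ * x)
          · exact (Equiv.mulLeft y⁻¹).bijective
          · intro x; simp [mul_assoc]
lemma convPow_pos_mul (μ : G → ℝ) (hnonneg : ∀ g, 0 ≤ μ g) {s t : ℕ} {a b : G}
    (ha : 0 < convPow μ s a) (hb : 0 < convPow μ t b) :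
    0 < convPow μ (s + t) (a * b) := by
  rw [convPow_add]
  have key : 0 < convPow μ s a * convPow μ t (a⁻¹ * (a * b)) := by
    rw [inv_mul_cancel_left]; exact mul_pos ha hb
  apply lt_of_lt_of_le key
  apply Finset.single_le_sum (f := fun x => convPow μ s x * convPow μ t (x⁻¹ * (a * b)))
  · intro x _
    exact mul_nonneg (convPow_nonneg μ hnonneg _ _) (convPow_nonneg μ hnonneg _ _)
  · exact Finset.mem_univ a

lemma convPow_pos_one (μ : G → ℝ) (hnonneg : ∀ g, 0 ≤ μ g) (hone : 0 < μ 1) :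
    ∀ t, 0 < convPow μ t 1 := by
  intro t
  induction t with
  | zero => simp [convPow]
  | succ t ih =>
    have : (0:ℝ) < convPow μ t 1 * μ ((1:G)⁻¹ * 1) := by
      simpa using mul_pos ih hone
    apply lt_of_lt_of_le this
    apply Finset.single_le_sum (f := fun x => convPow μ t x * μ (x⁻¹ * 1))
    · intro x _; exact mul_nonneg (convPow_nonneg μ hnonneg _ _) (hnonneg _)
    · exact Finset.mem_univ 1

lemma convPow_pos_mono (μ : G → ℝ) (hnonneg : ∀ g, 0 ≤ μ g) (hone : 0 < μ 1)
    {s t : ℕ} (hst : s ≤ t) {g : G} (hg : 0 < convPow μ s g) :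
    0 < convPow μ t g := by
  obtain ⟨k, rfl⟩ := Nat.exists_eq_add_of_le hst
  simpa using convPow_pos_mul μ hnonneg hg (convPow_pos_one μ hnonneg hone k)

lemma convPow_pos_pow (μ : G → ℝ) (hnonneg : ∀ g, 0 ≤ μ g) {t : ℕ} {a : G}
    (ha : 0 < convPow μ t a) (k : ℕ) : 0 < convPow μ (k * t) (a ^ k) := by
  induction k with
  | zero => simp [convPow]
  | succ k ih =>
    have := convPow_pos_mul μ hnonneg ih ha
    rw [pow_succ]
    convert this using 2
    ring

lemma exists_pos_convPow (μ : G → ℝ) (hnonneg : ∀ g, 0 ≤ μ g) (hone : 0 < μ 1)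
    (hconj : ∀ g h : G, μ (h * g * h⁻¹) = μ g)
    (hsupp : ∀ N : Subgroup G, N.Normal → (∀ g, μ g ≠ 0 → g ∈ N) → N = ⊤)
    (g : G) : ∃ t, 0 < convPow μ t g := by
  set P : Set G := {x | μ x ≠ 0} with hP
  have hclosure : Subgroup.closure P = ⊤ := by
    apply hsupp
    · constructor
      intro n hn h
      induction hn using Subgroup.closure_induction with
      | mem x hx =>
        apply Subgroup.subset_closure
        show μ (h * x * h⁻¹) ≠ 0
        rw [hconj]
        exact hx
      | one => simpa using Subgroup.one_mem _
      | mul x y _ _ hx hy =>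
        have : h * (x * y) * h⁻¹ = (h * x * h⁻¹) * (h * y * h⁻¹) := by group
        rw [this]; exact Subgroup.mul_mem _ hx hy
      | inv x _ hx =>
        have : h * x⁻¹ * h⁻¹ = (h * x * h⁻¹)⁻¹ := by group
        rw [this]; exact Subgroup.inv_mem _ hx
    · intro x hx
      exact Subgroup.subset_closure hx
  have hg : g ∈ Subgroup.closure P := by rw [hclosure]; trivial
  induction hg using Subgroup.closure_induction with
  | mem x hx =>
    refine ⟨1, ?_⟩
    have : convPow μ 1 x = μ x := by
      show (∑ y : G, convPow μ 0 y * μ (y⁻¹ * x)) = μ x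
      rw [Finset.sum_eq_single 1]
      · simp [convPow]
      · intro b _ hb; simp [convPow, hb]
      · simp
    rw [this]
    exact lt_of_le_of_ne (hnonneg x) (Ne.symm hx)
  | one => exact ⟨0, by simp [convPow]⟩
  | mul x y _ _ hx hy =>
    obtain ⟨s, hs⟩ := hx
    obtain ⟨t, ht⟩ := hy
    exact ⟨s + t, convPow_pos_mul μ hnonneg hs ht⟩
  | inv x _ hx =>
    obtain ⟨t, ht⟩ := hx
    refine ⟨(orderOf x - 1) * t, ?_⟩
    have hord : 0 < orderOf x := orderOf_pos x
    have hxinv : x⁻¹ = x ^ (orderOf x - 1) := by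
      symm
      rw [← mul_eq_one_iff_eq_inv', ← pow_succ', Nat.sub_add_cancel hord, pow_orderOf_eq_one]
    rw [hxinv]
    exact convPow_pos_pow μ hnonneg ht _
lemma convPow_le_one (μ : G → ℝ) (hnonneg : ∀ g, 0 ≤ μ g) (hsum : ∑ g : G, μ g = 1)
    (t : ℕ) (g : G) : convPow μ t g ≤ 1 := by
  rw [← convPow_sum μ hsum t]
  exact Finset.single_le_sum (f := fun x => convPow μ t x)
    (fun x _ => convPow_nonneg μ hnonneg t x) (Finset.mem_univ g)

lemma contraction (ν f : G → ℝ) (d : ℝ) (hd : ∀ y, d ≤ ν y)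
    (hν1 : ∑ y : G, ν y = 1) (hf : ∑ x : G, f x = 0) (B : ℝ)
    (hB : ∀ x, |f x| ≤ B) (g : G) :
    |∑ x : G, f x * ν (x⁻¹ * g)| ≤ (1 - (Fintype.card G : ℝ) * d) * B := by
  have hB0 : 0 ≤ B := le_trans (abs_nonneg _) (hB 1)
  have hshift : ∑ x : G, ν (x⁻¹ * g) = 1 := by
    rw [← hν1]; exact sum_shift ν g
  have key : ∑ x : G, f x * ν (x⁻¹ * g) = ∑ x : G, f x * (ν (x⁻¹ * g) - d) := by
    simp only [mul_sub]
    rw [Finset.sum_sub_distrib, ← Finset.sum_mul, hf, zero_mul, sub_zero]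
  rw [key]
  calc |∑ x : G, f x * (ν (x⁻¹ * g) - d)|
      ≤ ∑ x : G, |f x * (ν (x⁻¹ * g) - d)| := Finset.abs_sum_le_sum_abs _ _
    _ = ∑ x : G, |f x| * (ν (x⁻¹ * g) - d) := by
        congr 1; ext x
        rw [abs_mul, abs_of_nonneg (sub_nonneg.2 (hd _))]
    _ ≤ ∑ x : G, B * (ν (x⁻¹ * g) - d) := by
        apply Finset.sum_le_sum
        intro x _
        exact mul_le_mul_of_nonneg_right (hB x) (sub_nonneg.2 (hd _))
    _ = B * (1 - (Fintype.card G : ℝ) * d) := by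
        rw [← Finset.mul_sum, Finset.sum_sub_distrib, hshift]
        simp [mul_comm]
    _ = (1 - (Fintype.card G : ℝ) * d) * B := mul_comm _ _

set_option maxHeartbeats 1600000 in
/-- Let `μ` be a conjugation-invariant probability measure on a finite group `G` such that
`1 ∈ supp μ` and `supp μ` is not contained in any proper normal subgroup. Then there is
`0 < α < 1` such that for all `t`, `max_g ||G| μ^{*t}(g) − 1| ≤ |G| α^t`. -/
theorem mixing_of_conjugation_invariant_random_walk
    (μ : G → ℝ) (hnonneg : ∀ g, 0 ≤ μ g) (hsum : ∑ g : G, μ g = 1)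
    (hconj : ∀ g h : G, μ (h * g * h⁻¹) = μ g)
    (hone : 0 < μ 1)
    (hsupp : ∀ N : Subgroup G, N.Normal → (∀ g, μ g ≠ 0 → g ∈ N) → N = ⊤) :
    ∃ α : ℝ, 0 < α ∧ α < 1 ∧ ∀ (t : ℕ) (g : G),
      |(Fintype.card G : ℝ) * convPow μ t g - 1| ≤ (Fintype.card G : ℝ) * α ^ t := by
  classical
  have hn1 : 1 ≤ Fintype.card G := Fintype.card_pos
  -- trivial group case
  by_cases hcard : Fintype.card G = 1
  · refine ⟨1/2, by norm_num, by norm_num, ?_⟩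
    intro t g
    have : Subsingleton G := Fintype.card_le_one_iff_subsingleton.1 (by omega)
    have hval : convPow μ t g = 1 := by
      rw [← convPow_sum μ hsum t, Fintype.sum_subsingleton _ g]
    rw [hval, hcard]
    norm_num
  -- nontrivial case
  have hn2 : 2 ≤ Fintype.card G := by omega
  set nr : ℝ := (Fintype.card G : ℝ) with hnr
  have hnr1 : (1:ℝ) ≤ nr := by rw [hnr]; exact_mod_cast hn1
  have hnr2 : (2:ℝ) ≤ nr := by rw [hnr]; exact_mod_cast hn2
  have hnrpos : (0:ℝ) < nr := by linarith
  -- find T with convPow μ T positive everywhere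
  choose tt htt using exists_pos_convPow μ hnonneg hone hconj hsupp
  set T : ℕ := max 1 (Finset.univ.sup tt) with hT
  have hT1 : 1 ≤ T := le_max_left _ _
  have hTpos : ∀ g : G, 0 < convPow μ T g := fun g =>
    convPow_pos_mono μ hnonneg hone
      (le_trans (Finset.le_sup (Finset.mem_univ g)) (le_max_right _ _)) (htt g)
  -- the minimum value m of convPow μ T
  obtain ⟨g₀, _, hg₀⟩ := Finset.exists_mem_eq_inf' (s := (Finset.univ : Finset G))
    ⟨1, Finset.mem_univ 1⟩ (fun g => convPow μ T g)
  set m : ℝ := Finset.univ.inf' ⟨1, Finset.mem_univ 1⟩ (fun g => convPow μ T g) with hm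
  have hmpos : 0 < m := by rw [hg₀]; exact hTpos g₀
  have hmle : ∀ g : G, m ≤ convPow μ T g := fun g =>
    Finset.inf'_le _ (Finset.mem_univ g)
  -- Doeblin constant
  set δ : ℝ := min (m * nr) (1 / nr) with hδ
  have hδpos : 0 < δ := lt_min (mul_pos hmpos hnrpos) (by positivity)
  have hδle : δ ≤ 1 / nr := min_le_right _ _
  have hδle1 : δ ≤ 1 / 2 := le_trans hδle (by rw [div_le_div_iff₀ hnrpos (by norm_num)]; linarith)
  set γ : ℝ := 1 - δ with hγ
  have hγ0 : 0 ≤ γ := by rw [hγ]; linarith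
  have hγlt : γ < 1 := by rw [hγ]; linarith
  have hd : ∀ y : G, δ / nr ≤ convPow μ T y := by
    intro y
    have h1 : δ / nr ≤ m := by
      rw [div_le_iff₀ hnrpos]
      exact min_le_left _ _
    exact le_trans h1 (hmle y)
  have hγeq : 1 - nr * (δ / nr) = γ := by rw [hγ]; field_simp
  -- main inductive bound
  have main : ∀ t : ℕ, ∀ g : G, |convPow μ t g - 1 / nr| ≤ (1 - 1 / nr) * γ ^ (t / T) := by
    intro t
    induction t using Nat.strong_induction_on with
    | _ t ih =>
      intro g
      by_cases hlt : t < T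
      · rw [Nat.div_eq_of_lt hlt, pow_zero, mul_one, abs_le]
        have h0 := convPow_nonneg μ hnonneg t g
        have h1 := convPow_le_one μ hnonneg hsum t g
        have : 1 / nr ≤ 1 / 2 * 1 := by
          rw [mul_one, div_le_div_iff₀ hnrpos (by norm_num)]; linarith
        constructor <;> [nlinarith; linarith]
      · push_neg at hlt
        have htT : t = (t - T) + T := (Nat.sub_add_cancel hlt).symm
        have hdiv : t / T = (t - T) / T + 1 := Nat.div_eq_sub_div (by omega) hlt
        have hless : t - T < t := by omega
        have key0 : convPow μ t g = ∑ x : G, convPow μ (t - T) x * convPow μ T (x⁻¹ * g) := by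
          conv_lhs => rw [htT]
          rw [convPow_add]
        have key : convPow μ t g - 1 / nr =
            ∑ x : G, (convPow μ (t - T) x - 1 / nr) * convPow μ T (x⁻¹ * g) := by
          rw [key0]
          simp only [sub_mul]
          rw [Finset.sum_sub_distrib]
          congr 1
          rw [← Finset.mul_sum, sum_shift (convPow μ T) g, convPow_sum μ hsum]
          ring
        rw [key, hdiv, pow_succ]
        have hf0 : ∑ x : G, (convPow μ (t - T) x - 1 / nr) = 0 := by
          rw [Finset.sum_sub_distrib, convPow_sum μ hsum, Finset.sum_const,
            Finset.card_univ, nsmul_eq_mul, ← hnr]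
          field_simp
          norm_num
        have hcontr := contraction (convPow μ T) (fun x => convPow μ (t - T) x - 1 / nr)
          (δ / nr) hd (convPow_sum μ hsum T)
          hf0
          ((1 - 1 / nr) * γ ^ ((t - T) / T)) (fun x => ih _ hless x) g
        rw [hγeq] at hcontr
        calc |∑ x : G, (convPow μ (t - T) x - 1 / nr) * convPow μ T (x⁻¹ * g)|
            ≤ γ * ((1 - 1 / nr) * γ ^ ((t - T) / T)) := hcontr
          _ = (1 - 1 / nr) * (γ ^ ((t - T) / T) * γ) := by ring
  -- assemble the final answer
  set α : ℝ := 1 - δ / T with hα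
  have hTr : (1:ℝ) ≤ (T:ℝ) := by exact_mod_cast hT1
  have hTrpos : (0:ℝ) < (T:ℝ) := by linarith
  have hδT : δ / T ≤ δ := by
    rw [div_le_iff₀ hTrpos]; nlinarith [hδpos.le]
  have hα0 : 0 < α := by rw [hα]; linarith
  have hα1 : α < 1 := by rw [hα]; have := div_pos hδpos hTrpos; linarith
  refine ⟨α, hα0, hα1, ?_⟩
  intro t g
  have hmain := main t g
  have habs : |nr * convPow μ t g - 1| = nr * |convPow μ t g - 1 / nr| := by
    have h : nr * (convPow μ t g - 1 / nr) = nr * convPow μ t g - 1 := by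
      field_simp
      try ring
    rw [← h, abs_mul, abs_of_pos hnrpos]
  rw [habs]
  set k : ℕ := t / T with hk
  have step1 : nr * |convPow μ t g - 1 / nr| ≤ (nr - 1) * γ ^ k := by
    have := mul_le_mul_of_nonneg_left hmain hnrpos.le
    calc nr * |convPow μ t g - 1 / nr| ≤ nr * ((1 - 1 / nr) * γ ^ k) := this
      _ = (nr - 1) * γ ^ k := by
          have hne : nr ≠ 0 := ne_of_gt hnrpos
          field_simp
          try ring
  have hγk : (0:ℝ) ≤ γ ^ k := pow_nonneg hγ0 k
  have step2 : (nr - 1) * γ ^ k ≤ nr * γ ^ (k + 1) := by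
    have hnδ : nr * δ ≤ 1 := by
      calc nr * δ ≤ nr * (1 / nr) := by nlinarith
        _ = 1 := by field_simp
    have : nr - 1 ≤ nr * γ := by rw [hγ]; nlinarith
    calc (nr - 1) * γ ^ k ≤ (nr * γ) * γ ^ k := mul_le_mul_of_nonneg_right this hγk
      _ = nr * γ ^ (k + 1) := by rw [pow_succ]; ring
  have hBern : γ ≤ α ^ T := by
    have h2 : (-2:ℝ) ≤ -(δ / T) := by
      have : δ / T ≤ 1 := le_trans hδT (by linarith)
      linarith
    have := one_add_mul_le_pow h2 T
    calc γ = 1 + (T:ℝ) * (-(δ / T)) := by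
          rw [hγ]
          field_simp
          try ring
      _ ≤ (1 + (-(δ / T))) ^ T := this
      _ = α ^ T := by rw [hα]; ring_nf
  have step3 : nr * γ ^ (k + 1) ≤ nr * α ^ t := by
    apply mul_le_mul_of_nonneg_left _ hnrpos.le
    calc γ ^ (k + 1) ≤ (α ^ T) ^ (k + 1) :=
          pow_le_pow_left₀ hγ0 hBern _
      _ = α ^ (T * (k + 1)) := by rw [← pow_mul]
      _ ≤ α ^ t := by
          apply pow_le_pow_of_le_one hα0.le hα1.le
          have h := Nat.lt_div_mul_add (a := t) (b := T)
            (Nat.lt_of_lt_of_le Nat.zero_lt_one hT1)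
          calc t ≤ t / T * T + T := h.le
            _ = T * (k + 1) := by rw [hk]; ring
  linarith
end

section
/- Let f : Z → Y be a continuous open map of topological spaces with Y irreducible. Suppose there is a dense subset U ⊆ Y such that for every y ∈ U the fiber f⁻¹(y) is irreducible (in particular nonempty; a subspace is irreducible if it is nonempty and not the union of two proper closed subsets). Then Z is irreducible. -/
/-- Let `f : Z → Y` be a continuous open map of topological spaces with `Y` irreducible.
If there is a dense set `U ⊆ Y` such that `f⁻¹(y)` is irreducible for every `y ∈ U`,
then `Z` is irreducible. -/
theorem irreducibleSpace_of_open_map_irreducible_fibers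
    {Z Y : Type*} [TopologicalSpace Z] [TopologicalSpace Y]
    (f : Z → Y) (hcont : Continuous f) (hopen : IsOpenMap f)
    [IrreducibleSpace Y]
    (U : Set Y) (hU : Dense U)
    (hfib : ∀ y ∈ U, IsIrreducible (f ⁻¹' {y})) :
    IrreducibleSpace Z := by
  have hne : Nonempty Z := by
    obtain ⟨y, hy⟩ := hU.nonempty
    obtain ⟨z, hz⟩ := (hfib y hy).1
    exact ⟨z⟩
  refine { toNonempty := hne, isPreirreducible_univ := ?_ }
  rintro u v hu hv ⟨z1, -, hz1⟩ ⟨z2, -, hz2⟩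
  have hY := (IrreducibleSpace.isIrreducible_univ Y).2 (f '' u) (f '' v)
    (hopen u hu) (hopen v hv) ⟨f z1, Set.mem_univ _, ⟨z1, hz1, rfl⟩⟩
    ⟨f z2, Set.mem_univ _, ⟨z2, hz2, rfl⟩⟩
  obtain ⟨y0, -, hy0⟩ := hY
  obtain ⟨y, ⟨hyu, hyv⟩, hyU⟩ := hU.inter_open_nonempty _ ((hopen u hu).inter (hopen v hv))
    ⟨y0, hy0⟩
  obtain ⟨a, hau, ha⟩ := hyu
  obtain ⟨b, hbv, hb⟩ := hyv
  obtain ⟨z, hz, hzu, hzv⟩ := (hfib y hyU).2 u v hu hv ⟨a, ha, hau⟩ ⟨b, hb, hbv⟩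
  exact ⟨z, Set.mem_univ _, hzu, hzv⟩
end
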